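/- arXiv:1505.03555 — 7 statements merged into one kernel-verified Lean document; each statement's English description precedes it below -/
import Mathlib

section
/- Consider the no-agreement congestion game with N subscribers, M content providers, common demand φ > 0, congestion parameter a > 0, in which every content provider charges the same price p ≥ 0. Then the symmetric profile in which every subscriber n sends x_n^m = φ/M to every content provider m is the unique Nash equilibrium of the game. -/
open Finset

/-- A strategy of a subscriber is feasible if it is nonnegative and sums to the demand `φ`. -/
def Feasible (M : ℕ) (φ : ℝ) (v : Fin M → ℝ) : Prop :=
  (∀ m, 0 ≤ v m) ∧ ∑ m, v m = φ

/-- Cost of subscriber `n` in the no-agreement congestion game with linear preference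
cost `D(t) = a·t` and prices `p`. -/
noncomputable def cost (N M : ℕ) (a : ℝ) (p : Fin M → ℝ)
    (x : Fin N → Fin M → ℝ) (n : Fin N) : ℝ :=
  ∑ m, x n m * (a * (∑ n', x n' m) + p m)

/-- Nash equilibrium of the no-agreement congestion game: every subscriber's strategy is
feasible and no subscriber can decrease its cost by a unilateral feasible deviation. -/
def IsNash (N M : ℕ) (φ a : ℝ) (p : Fin M → ℝ) (x : Fin N → Fin M → ℝ) : Prop :=
  (∀ n, Feasible M φ (x n)) ∧
  ∀ (n : Fin N) (y : Fin M → ℝ), Feasible M φ y →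
    cost N M a p x n ≤ cost N M a p (Function.update x n y) n

/-!
After a deviation `x n + u`, the cost of subscriber `n` is
`cost + ∑ m, u m * h m + a * ∑ m, u m ^ 2`, where `h m = a * (x n m + ∑ n', x n' m) + p m`
is its marginal cost at CP `m`. Shifting a little traffic from `j` to `i` shows that at an
equilibrium every CP that `n` uses has minimal marginal cost; conversely, a profile with constant
marginal costs is an equilibrium because the quadratic term is nonnegative. With a uniform
price, if CP `i` carried a larger load than CP `j`, every subscriber would send at most as much
traffic to `i` as to `j`, which is absurd; so all loads are equal, every CP that `n` uses carries
the least traffic of `x n`, and hence `x n m = φ / M`.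
-/

def marginalCost {N M : ℕ} (a : ℝ) (p : Fin M → ℝ) (x : Fin N → Fin M → ℝ) (n : Fin N)
    (m : Fin M) : ℝ :=
  a * (x n m + ∑ n', x n' m) + p m

lemma eq_of_nonneg_of_pos_le {ι : Type*} {v : ι → ℝ} (hv : ∀ i, 0 ≤ v i)
    (h : ∀ i j, 0 < v j → v j ≤ v i) (i j : ι) : v i = v j := by
  rcases (hv i).eq_or_lt with hi | hi <;> rcases (hv j).eq_or_lt with hj | hj
  · rw [← hi, ← hj]
  · linarith [h i j hj]
  · linarith [h j i hi]
  · exact le_antisymm (h j i hi) (h i j hj)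

lemma eq_div_of_forall_eq_of_sum_eq {M : ℕ} (hM : M ≠ 0) {v : Fin M → ℝ} {φ : ℝ}
    (hv : ∀ i j, v i = v j) (hsum : ∑ m, v m = φ) (i : Fin M) : v i = φ / M := by
  rw [eq_div_iff (Nat.cast_ne_zero.mpr hM), ← hsum, Finset.sum_congr rfl fun m _ => hv m i]
  simp [mul_comm]

lemma feasible_const {M : ℕ} {φ : ℝ} (hM : M ≠ 0) (hφ : 0 ≤ φ) : Feasible M φ fun _ => φ / M :=
  ⟨fun _ => by positivity, by simp [field]⟩

lemma Feasible.add_single_sub_single {M : ℕ} {φ ε : ℝ} {v : Fin M → ℝ} (hv : Feasible M φ v)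
    (hε : 0 ≤ ε) {j : Fin M} (hεj : ε ≤ v j) (i : Fin M) :
    Feasible M φ (v + (Pi.single i ε - Pi.single j ε)) := by
  refine ⟨fun m => ?_, by simp [Finset.sum_add_distrib, hv.2]⟩
  have := hv.1 m
  simp only [Pi.add_apply, Pi.sub_apply, Pi.single_apply]
  split_ifs with hi hj <;> subst_vars <;> linarith

lemma sum_single_sub_single_mul {M : ℕ} (ε : ℝ) (i j : Fin M) (h : Fin M → ℝ) :
    ∑ m, (Pi.single i ε - Pi.single j ε : Fin M → ℝ) m * h m = ε * (h i - h j) := by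
  simp [sub_mul, Finset.sum_sub_distrib, Pi.single_apply, mul_sub]

lemma sum_single_sub_single_sq {M : ℕ} (ε : ℝ) {i j : Fin M} (hij : i ≠ j) :
    ∑ m, (Pi.single i ε - Pi.single j ε : Fin M → ℝ) m ^ 2 = 2 * ε ^ 2 := by
  rw [Fintype.sum_eq_add i j hij fun m hm => by simp [hm.1, hm.2]]
  simp only [Pi.sub_apply, Pi.single_eq_same, Pi.single_eq_of_ne hij, Pi.single_eq_of_ne hij.symm,
    sub_zero, zero_sub, even_two, Even.neg_pow]
  ring

section
variable {N M : ℕ} {φ a : ℝ} {p : Fin M → ℝ} {x : Fin N → Fin M → ℝ}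

lemma update_self_add_eq_add_single (n : Fin N) (u : Fin M → ℝ) :
    Function.update x n (x n + u) = x + Pi.single n u := by
  ext n' m
  by_cases h : n' = n
  · subst h; simp
  · simp [h]

lemma cost_update_self_add (n : Fin N) (u : Fin M → ℝ) :
    cost N M a p (Function.update x n (x n + u)) n
      = cost N M a p x n + ∑ m, u m * marginalCost a p x n m + a * ∑ m, u m ^ 2 := by
  have hload (m : Fin M) :
      ∑ n', (x n' m + (Pi.single n u : Fin N → Fin M → ℝ) n' m) = ∑ n', x n' m + u m := by
    simp [Finset.sum_add_distrib, ← Finset.sum_apply, Finset.sum_pi_single']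
  simp only [cost, marginalCost, update_self_add_eq_add_single, hload, Pi.add_apply,
    Pi.single_eq_same]
  rw [Finset.mul_sum, ← Finset.sum_add_distrib, ← Finset.sum_add_distrib]
  refine Finset.sum_congr rfl fun m _ => ?_
  ring

lemma IsNash.marginalCost_le (ha : 0 < a) (hx : IsNash N M φ a p x) {n : Fin N} {j : Fin M}
    (hj : 0 < x n j) (i : Fin M) : marginalCost a p x n j ≤ marginalCost a p x n i := by
  rcases eq_or_ne i j with rfl | hij
  · rfl
  set h := marginalCost a p x n
  have hshift (ε : ℝ) (hε : 0 < ε) (hεj : ε ≤ x n j) : h j - h i ≤ 2 * a * ε := by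
    have hdev := hx.2 n _ ((hx.1 n).add_single_sub_single hε.le hεj i)
    rw [cost_update_self_add, sum_single_sub_single_mul, sum_single_sub_single_sq _ hij] at hdev
    nlinarith
  by_contra! hlt
  have hq : 0 < (h j - h i) / (4 * a) := by apply div_pos <;> linarith
  have hε := hshift _ (lt_min hj hq) (min_le_left _ _)
  have : 2 * a * min (x n j) ((h j - h i) / (4 * a)) ≤ 2 * a * ((h j - h i) / (4 * a)) :=
    mul_le_mul_of_nonneg_left (min_le_right _ _) (by linarith)
  have : 2 * a * ((h j - h i) / (4 * a)) = (h j - h i) / 2 := by field_simp; ring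
  linarith

lemma isNash_of_marginalCost_const (ha : 0 ≤ a) (hfeas : ∀ n, Feasible M φ (x n))
    (hconst : ∀ n, ∃ c, ∀ m, marginalCost a p x n m = c) : IsNash N M φ a p x := by
  refine ⟨hfeas, fun n y hy => ?_⟩
  obtain ⟨c, hc⟩ := hconst n
  have hfirst_order : ∑ m, (y - x n) m * marginalCost a p x n m = 0 := by
    simp [hc, ← Finset.sum_mul, Finset.sum_sub_distrib, hy.2, (hfeas n).2]
  rw [← add_sub_cancel (x n) y, cost_update_self_add, hfirst_order]
  have : 0 ≤ a * ∑ m, (y - x n) m ^ 2 := by positivity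
  linarith

lemma IsNash.load_le (ha : 0 < a) {p₀ : ℝ} (hx : IsNash N M φ a (fun _ => p₀) x) {n : Fin N}
    {j : Fin M} (hj : 0 < x n j) (i : Fin M) :
    x n j + ∑ n', x n' j ≤ x n i + ∑ n', x n' i := by
  have := hx.marginalCost_le ha hj i
  simp only [marginalCost, add_le_add_iff_right] at this
  exact le_of_mul_le_mul_left this ha

lemma IsNash.load_eq (ha : 0 < a) {p₀ : ℝ} (hx : IsNash N M φ a (fun _ => p₀) x) (i j : Fin M) :
    ∑ n, x n i = ∑ n, x n j := by
  suffices h : ∀ i j, ∑ n, x n i ≤ ∑ n, x n j from le_antisymm (h i j) (h j i)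
  intro i j
  by_contra! hlt
  have : ∑ n, x n i ≤ ∑ n, x n j := by
    refine Finset.sum_le_sum fun n _ => ?_
    rcases ((hx.1 n).1 i).eq_or_lt with h0 | hpos
    · exact h0 ▸ (hx.1 n).1 j
    · linarith [hx.load_le ha hpos j]
  linarith

end

theorem stmt0_general (N M : ℕ) (hM : 1 ≤ M) (φ a p : ℝ)
    (hφ : 0 < φ) (ha : 0 < a) (x : Fin N → Fin M → ℝ) :
    IsNash N M φ a (fun _ => p) x ↔ x = fun _ _ => φ / M := by
  have hM0 : M ≠ 0 := Nat.one_le_iff_ne_zero.mp hM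
  constructor
  · intro hx
    funext n
    refine funext <| eq_div_of_forall_eq_of_sum_eq hM0 ?_ (hx.1 n).2
    refine eq_of_nonneg_of_pos_le (hx.1 n).1 fun i j hj => ?_
    linarith [hx.load_le ha hj i, hx.load_eq ha i j]
  · rintro rfl
    exact isNash_of_marginalCost_const ha.le (fun _ => feasible_const hM0 hφ.le)
      fun _ => ⟨_, fun _ => rfl⟩

/-- with uniform price `p`, the symmetric profile `x_n^m = φ/M` is
the unique Nash equilibrium. -/
theorem stmt0 (N M : ℕ) (hN : 1 ≤ N) (hM : 1 ≤ M) (φ a p : ℝ)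
    (hφ : 0 < φ) (ha : 0 < a) (hp : 0 ≤ p) (x : Fin N → Fin M → ℝ) :
    IsNash N M φ a (fun _ => p) x ↔ x = fun _ _ => φ / M :=
  stmt0_general N M hM φ a p hφ ha x
end

section
/- Consider the no-agreement congestion game with N ≥ 1 subscribers, M ≥ 2 content providers, demand φ > 0 and congestion parameter a > 0, where CP 1 charges price p ≥ 0 and every CP m ∈ {2,…,M} charges price q ≥ 0. Assume −aφ(N+1) ≤ p − q ≤ aφ(N+1)/(M−1). Then the profile in which every subscriber sends y = φ/M − (M−1)(p−q)/(M·a·(N+1)) to CP 1 and x = φ/M + (p−q)/(M·a·(N+1)) to each CP m ∈ {2,…,M} is a Nash equilibrium of the game (and the assumed inequalities guarantee y ≥ 0 and x ≥ 0). -/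
open Finset

/-!
Against a symmetric profile `X`, a unilateral deviation `y` changes the deviator's cost by
`∑ₘ a (yₘ - Xₘ)² + ∑ₘ (a (N + 1) Xₘ + pₘ) (yₘ - Xₘ)`. The flows `y, x` are exactly the ones that
equalise the marginal costs `a (N + 1) Xₘ + pₘ` across CPs; since every feasible deviation has
the same total demand `φ`, the linear term vanishes and the change is a nonnegative quadratic.
-/

theorem Finset.sum_ite_eq_add_card_sub_one_mul {ι R : Type*} [Fintype ι] [DecidableEq ι]
    [CommRing R] (i₀ : ι) (A B : R) :
    ∑ i, (if i = i₀ then A else B) = A + ((Fintype.card ι : R) - 1) * B := by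
  have hsplit : ∀ i, (if i = i₀ then A else B) = (if i = i₀ then A - B else 0) + B := by
    intro i; split <;> ring
  simp only [hsplit, Finset.sum_add_distrib, Finset.sum_ite_eq', Finset.mem_univ, if_true,
    Finset.sum_const, Finset.card_univ, nsmul_eq_mul]
  ring

section SymmetricProfile

variable {N M : ℕ} {a : ℝ} {p : Fin M → ℝ} {X : Fin M → ℝ}

theorem sum_update_const_apply (n : Fin N) (y : Fin M → ℝ) (m : Fin M) :
    ∑ n', Function.update (fun _ => X) n y n' m = y m + ((N : ℝ) - 1) * X m := by
  simp only [Function.update_apply, apply_ite (fun v : Fin M → ℝ => v m)]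
  simpa using Finset.sum_ite_eq_add_card_sub_one_mul n (y m) (X m)

theorem cost_update_sub_cost (n : Fin N) (y : Fin M → ℝ) :
    cost N M a p (Function.update (fun _ => X) n y) n - cost N M a p (fun _ => X) n =
      ∑ m, (a * (y m - X m) ^ 2 + (a * ((N : ℝ) + 1) * X m + p m) * (y m - X m)) := by
  simp only [cost, Function.update_self, sum_update_const_apply, Finset.sum_const,
    Finset.card_univ, Fintype.card_fin, nsmul_eq_mul, ← Finset.sum_sub_distrib]
  exact Finset.sum_congr rfl fun m _ => by ring

theorem isNash_const_of_marginal_cost_eq {φ K : ℝ} (ha : 0 ≤ a) (hX : Feasible M φ X)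
    (hK : ∀ m, a * ((N : ℝ) + 1) * X m + p m = K) :
    IsNash N M φ a p (fun _ => X) := by
  refine ⟨fun _ => hX, fun n y hy => sub_nonneg.mp ?_⟩
  have hlinear : ∑ m, (a * ((N : ℝ) + 1) * X m + p m) * (y m - X m) = 0 := by
    simp only [hK, ← Finset.mul_sum, Finset.sum_sub_distrib, hy.2, hX.2, sub_self, mul_zero]
  rw [cost_update_sub_cost, Finset.sum_add_distrib, hlinear, add_zero]
  exact Finset.sum_nonneg fun m _ => by positivity

end SymmetricProfile

section TwoPriceFlows

variable {M a b φ d : ℝ}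

theorem two_price_flows_sum (hM : M ≠ 0) :
    (φ / M - (M - 1) * d / (M * a * b)) + (M - 1) * (φ / M + d / (M * a * b)) = φ := by
  field_simp
  ring

theorem two_price_marginal_cost_eq (hM : M ≠ 0) (ha : a ≠ 0) (hb : b ≠ 0) (q : ℝ) :
    a * b * (φ / M - (M - 1) * d / (M * a * b)) + (q + d) =
      a * b * (φ / M + d / (M * a * b)) + q := by
  field_simp
  ring

theorem two_price_flow_one_nonneg (hM : 0 < M - 1) (ha : 0 < a) (hb : 0 < b)
    (hd : d ≤ a * φ * b / (M - 1)) :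
    0 ≤ φ / M - (M - 1) * d / (M * a * b) := by
  have hM₀ : 0 < M := by linarith
  have hd' : d * (M - 1) ≤ a * φ * b := (le_div_iff₀ hM).mp hd
  rw [sub_nonneg, div_le_div_iff₀ (by positivity) hM₀]
  calc (M - 1) * d * M = d * (M - 1) * M := by ring
    _ ≤ a * φ * b * M := by gcongr
    _ = φ * (M * a * b) := by ring

theorem two_price_flow_other_nonneg (hM : 0 < M) (ha : 0 < a) (hb : 0 < b)
    (hd : -(a * φ * b) ≤ d) :
    0 ≤ φ / M + d / (M * a * b) := by
  have hsum : φ / M + d / (M * a * b) = (a * φ * b + d) / (M * a * b) := by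
    field_simp
  rw [hsum]
  exact div_nonneg (by linarith) (by positivity)

end TwoPriceFlows

/-- with CP 1 charging `p` and all other CPs charging `q`, under the stated
bounds on `p − q`, the symmetric profile sending
`y = φ/M − (M−1)(p−q)/(M·a·(N+1))` to CP 1 and `x = φ/M + (p−q)/(M·a·(N+1))` to every
other CP is a Nash equilibrium, and these flows are nonnegative. -/
theorem stmt1 (N M : ℕ) (hM : 2 ≤ M) (φ a p q : ℝ)
    (ha : 0 < a)
    (hlo : -(a * φ * ((N : ℝ) + 1)) ≤ p - q)
    (hhi : p - q ≤ a * φ * ((N : ℝ) + 1) / ((M : ℝ) - 1)) :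
    0 ≤ φ / M - ((M : ℝ) - 1) * (p - q) / ((M : ℝ) * a * ((N : ℝ) + 1)) ∧
    0 ≤ φ / M + (p - q) / ((M : ℝ) * a * ((N : ℝ) + 1)) ∧
    IsNash N M φ a
      (fun m => if m = (⟨0, by omega⟩ : Fin M) then p else q)
      (fun _ m => if m = (⟨0, by omega⟩ : Fin M) then
          φ / M - ((M : ℝ) - 1) * (p - q) / ((M : ℝ) * a * ((N : ℝ) + 1))
        else
          φ / M + (p - q) / ((M : ℝ) * a * ((N : ℝ) + 1))) := by
  have hM₁ : (0 : ℝ) < M - 1 := by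
    have : (2 : ℝ) ≤ M := by exact_mod_cast hM
    linarith
  have hM₀ : (0 : ℝ) < M := by linarith
  have hN₁ : (0 : ℝ) < N + 1 := by positivity
  have hy := two_price_flow_one_nonneg hM₁ ha hN₁ hhi
  have hx := two_price_flow_other_nonneg hM₀ ha hN₁ hlo
  refine ⟨hy, hx, isNash_const_of_marginal_cost_eq ha.le ⟨fun m => ?_, ?_⟩
    (K := a * ((N : ℝ) + 1) * (φ / M + (p - q) / ((M : ℝ) * a * ((N : ℝ) + 1))) + q)
    fun m => ?_⟩
  · beta_reduce
    split <;> assumption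
  · rw [Finset.sum_ite_eq_add_card_sub_one_mul, Fintype.card_fin]
    exact two_price_flows_sum hM₀.ne'
  · split
    · simpa using two_price_marginal_cost_eq hM₀.ne' ha.ne' hN₁.ne' q (d := p - q)
    · rfl
end

section
/- Consider the agreement congestion game with N ≥ 3 subscribers and N content providers, demand φ > 0 and congestion parameter a > 0, where CP 1 charges price p ≥ 0 to its non-associated subscribers and every other CP charges q ≥ 0 to its non-associated subscribers. Set δ = p − q and define: y = (φ + (N−1)q/a)/N + (N−1)²·δ/(a·N·(N+1)) (flow of subscriber 1 to CP 1), x = (φ − q/a)/N − (N−1)·δ/(a·N·(N+1)) (flow of subscriber 1 to each CP m ≠ 1), u = (φ − q/a)/N − 2(N−1)·δ/(a·N·(N+1)) (flow of each subscriber n ≠ 1 to CP 1), v = (φ + (N−1)q/a)/N + 2δ/(a·N·(N+1)) (flow of each subscriber n ≠ 1 to its own CP n), and w = (φ − q/a)/N + 2δ/(a·N·(N+1)) (flow of each subscriber n ≠ 1 to each CP m ∉ {1, n}). If x, y, u, v, w are all nonnegative, then this profile is a Nash equilibrium of the agreement congestion game. -/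
open Finset

/-- Cost of subscriber `n` in the agreement congestion game: subscriber `n` pays nothing
per unit of traffic downloaded from its associated CP `n`, and pays `p m` per unit of
traffic from every other CP `m`; the congestion cost is linear, `D(t) = a·t`. -/
noncomputable def costV (N : ℕ) (a : ℝ) (p : Fin N → ℝ)
    (x : Fin N → Fin N → ℝ) (n : Fin N) : ℝ :=
  ∑ m, x n m * (a * (∑ n', x n' m) + if m = n then 0 else p m)

/-- Nash equilibrium of the agreement congestion game. -/
def IsNashV (N : ℕ) (φ a : ℝ) (p : Fin N → ℝ) (x : Fin N → Fin N → ℝ) : Prop :=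
  (∀ n, Feasible N φ (x n)) ∧
  ∀ (n : Fin N) (y : Fin N → ℝ), Feasible N φ y →
    costV N a p x n ≤ costV N a p (Function.update x n y) n

/-! The first-order condition suffices: a subscriber's cost is a convex quadratic in its own
flow vector, so a feasible vector on which its marginal cost `a·(x_n^m + Σ_{n'} x_{n'}^m) + p^m`
is the same for every CP `m` is a best response. For the stated profile this reduces to five
identities between `y, x, u, v, w`: two demand constraints and three equalities of marginal
costs, all checked by direct computation. -/

section

variable {ι : Type*} [Fintype ι]

theorem sum_mul_add_le_of_marginal_eq {a lam : ℝ} (ha : 0 ≤ a) {c z z' : ι → ℝ}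
    (hsum : ∑ i, z i = ∑ i, z' i) (hmarg : ∀ i, 2 * a * z i + c i = lam) :
    ∑ i, z i * (a * z i + c i) ≤ ∑ i, z' i * (a * z' i + c i) := by
  have hexpand : ∀ i, z' i * (a * z' i + c i)
      = z i * (a * z i + c i) + a * (z' i - z i) ^ 2 + lam * (z' i - z i) := by
    intro i; rw [← hmarg i]; ring
  have hlin : ∑ i, lam * (z' i - z i) = 0 := by
    rw [← mul_sum, sum_sub_distrib, hsum, sub_self, mul_zero]
  rw [sum_congr rfl fun i _ => hexpand i, sum_add_distrib, sum_add_distrib, hlin, add_zero]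
  exact le_add_of_nonneg_right (sum_nonneg fun i _ => mul_nonneg ha (sq_nonneg _))

variable [DecidableEq ι]

theorem sum_ite_eq_add_mul (i : ι) (b c : ℝ) :
    ∑ n, (if n = i then b else c) = b + ((Fintype.card ι : ℝ) - 1) * c := by
  have hsplit : ∀ n, (if n = i then b else c) = c + if n = i then b - c else 0 := by
    intro n; split_ifs <;> ring
  rw [sum_congr rfl fun n _ => hsplit n, sum_add_distrib, sum_ite_eq' univ i, if_pos (mem_univ i),
    sum_const, card_univ, nsmul_eq_mul]
  ring

theorem sum_ite_ite_eq_add_mul {i j : ι} (hij : i ≠ j) (b d c : ℝ) :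
    ∑ n, (if n = i then b else if n = j then d else c)
      = b + d + ((Fintype.card ι : ℝ) - 2) * c := by
  have hsplit : ∀ n, (if n = i then b else if n = j then d else c)
      = (if n = j then d else c) + if n = i then b - c else 0 := by
    intro n
    by_cases hi : n = i
    · subst hi; simp [hij]
    · simp [hi]
  rw [sum_congr rfl fun n _ => hsplit n, sum_add_distrib, sum_ite_eq_add_mul, sum_ite_eq' univ i,
    if_pos (mem_univ i)]
  ring

end

theorem costV_update_self {N : ℕ} (a : ℝ) (p : Fin N → ℝ) (x : Fin N → Fin N → ℝ) (n : Fin N)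
    (z : Fin N → ℝ) :
    costV N a p (Function.update x n z) n = ∑ m, z m * (a * z m +
      (a * ∑ n' ∈ univ.erase n, x n' m + if m = n then 0 else p m)) := by
  refine sum_congr rfl fun m _ => ?_
  rw [← add_sum_erase _ _ (mem_univ n),
    sum_congr rfl fun n' hn' => by rw [Function.update_of_ne (ne_of_mem_erase hn')],
    Function.update_self]
  ring

theorem isNashV_of_marginal_eq {N : ℕ} {φ a : ℝ} (ha : 0 ≤ a) {p : Fin N → ℝ}
    {x : Fin N → Fin N → ℝ} (hfeas : ∀ n, Feasible N φ (x n))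
    (hmarg : ∀ n, ∃ lam, ∀ m, a * x n m + a * ∑ n', x n' m + (if m = n then 0 else p m) = lam) :
    IsNashV N φ a p x := by
  refine ⟨hfeas, fun n z hz => ?_⟩
  obtain ⟨lam, hlam⟩ := hmarg n
  have hcost := costV_update_self a p x n (x n)
  rw [Function.update_eq_self] at hcost
  rw [hcost, costV_update_self]
  refine sum_mul_add_le_of_marginal_eq (lam := lam) ha (by rw [(hfeas n).2, hz.2]) fun m => ?_
  rw [← hlam m, ← add_sum_erase _ _ (mem_univ n)]
  ring

/-- The symmetric profile around the distinguished subscriber `o` (subscriber 1 in the paper). -/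
def agreementProfile {N : ℕ} (o : Fin N) (y x u v w : ℝ) : Fin N → Fin N → ℝ :=
  fun n m => if n = o then (if m = o then y else x) else if m = o then u else if m = n then v else w

section AgreementProfile

variable {N : ℕ} (o : Fin N) (y x u v w : ℝ)

theorem agreementProfile_self_self : agreementProfile o y x u v w o o = y := by
  simp [agreementProfile]

theorem agreementProfile_self_of_ne {m : Fin N} (hm : m ≠ o) :
    agreementProfile o y x u v w o m = x := by
  simp [agreementProfile, hm]

theorem agreementProfile_of_ne_self {n : Fin N} (hn : n ≠ o) :
    agreementProfile o y x u v w n o = u := by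
  simp [agreementProfile, hn]

theorem agreementProfile_of_ne_diag {n : Fin N} (hn : n ≠ o) :
    agreementProfile o y x u v w n n = v := by
  simp [agreementProfile, hn]

theorem agreementProfile_of_ne_of_ne {n m : Fin N} (hn : n ≠ o) (hm : m ≠ o) (hmn : m ≠ n) :
    agreementProfile o y x u v w n m = w := by
  simp [agreementProfile, hn, hm, hmn]

theorem sum_agreementProfile_self :
    ∑ m, agreementProfile o y x u v w o m = y + ((N : ℝ) - 1) * x := by
  have hrow : ∀ m, agreementProfile o y x u v w o m = if m = o then y else x := fun m => if_pos rfl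
  rw [sum_congr rfl fun m _ => hrow m, sum_ite_eq_add_mul, Fintype.card_fin]

theorem sum_agreementProfile_of_ne {n : Fin N} (hn : n ≠ o) :
    ∑ m, agreementProfile o y x u v w n m = u + v + ((N : ℝ) - 2) * w := by
  have hrow : ∀ m, agreementProfile o y x u v w n m
      = if m = o then u else if m = n then v else w := fun m => if_neg hn
  rw [sum_congr rfl fun m _ => hrow m, sum_ite_ite_eq_add_mul (Ne.symm hn), Fintype.card_fin]

theorem load_agreementProfile_self :
    ∑ n, agreementProfile o y x u v w n o = y + ((N : ℝ) - 1) * u := by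
  have hcol : ∀ n, agreementProfile o y x u v w n o = if n = o then y else u := by
    intro n
    by_cases hn : n = o
    · rw [hn, agreementProfile_self_self, if_pos rfl]
    · rw [agreementProfile_of_ne_self o y x u v w hn, if_neg hn]
  rw [sum_congr rfl fun n _ => hcol n, sum_ite_eq_add_mul, Fintype.card_fin]

theorem load_agreementProfile_of_ne {m : Fin N} (hm : m ≠ o) :
    ∑ n, agreementProfile o y x u v w n m = x + v + ((N : ℝ) - 2) * w := by
  have hcol : ∀ n, agreementProfile o y x u v w n m
      = if n = o then x else if n = m then v else w := by
    intro n
    by_cases hno : n = o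
    · rw [hno, agreementProfile_self_of_ne o y x u v w hm, if_pos rfl]
    · by_cases hnm : n = m
      · rw [hnm, agreementProfile_of_ne_diag o y x u v w hm, if_neg hm, if_pos rfl]
      · rw [agreementProfile_of_ne_of_ne o y x u v w hno hm (Ne.symm hnm), if_neg hno, if_neg hnm]
  rw [sum_congr rfl fun n _ => hcol n, sum_ite_ite_eq_add_mul (Ne.symm hm), Fintype.card_fin]

end AgreementProfile

theorem isNashV_agreementProfile {N : ℕ} (o : Fin N) {φ a p q y x u v w : ℝ} (ha : 0 ≤ a)
    (hy0 : 0 ≤ y) (hx0 : 0 ≤ x) (hu0 : 0 ≤ u) (hv0 : 0 ≤ v) (hw0 : 0 ≤ w)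
    (hdemand_o : y + ((N : ℝ) - 1) * x = φ) (hdemand : u + v + ((N : ℝ) - 2) * w = φ)
    (hmarg_o : a * y + a * (y + ((N : ℝ) - 1) * u)
      = a * x + a * (x + v + ((N : ℝ) - 2) * w) + q)
    (hmarg_u : a * u + a * (y + ((N : ℝ) - 1) * u) + p
      = a * v + a * (x + v + ((N : ℝ) - 2) * w))
    (hmarg_w : a * v = a * w + q) :
    IsNashV N φ a (fun m => if m = o then p else q) (agreementProfile o y x u v w) := by
  refine isNashV_of_marginal_eq ha (fun n => ⟨fun m => ?_, ?_⟩) fun n => ?_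
  · simp only [agreementProfile]; split_ifs <;> assumption
  · by_cases hn : n = o
    · rw [hn, sum_agreementProfile_self, hdemand_o]
    · rw [sum_agreementProfile_of_ne o y x u v w hn, hdemand]
  · by_cases hn : n = o
    · subst hn
      refine ⟨a * y + a * (y + ((N : ℝ) - 1) * u), fun m => ?_⟩
      by_cases hm : m = n
      · rw [hm, agreementProfile_self_self, load_agreementProfile_self, if_pos rfl, add_zero]
      · rw [agreementProfile_self_of_ne _ _ _ _ _ _ hm, load_agreementProfile_of_ne _ _ _ _ _ _ hm,
          if_neg hm, if_neg hm, hmarg_o]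
    · refine ⟨a * v + a * (x + v + ((N : ℝ) - 2) * w), fun m => ?_⟩
      by_cases hmo : m = o
      · rw [hmo, agreementProfile_of_ne_self _ _ _ _ _ _ hn, load_agreementProfile_self,
          if_neg (Ne.symm hn), if_pos rfl, hmarg_u]
      · rw [load_agreementProfile_of_ne _ _ _ _ _ _ hmo, if_neg hmo]
        by_cases hmn : m = n
        · rw [hmn, agreementProfile_of_ne_diag _ _ _ _ _ _ hn, if_pos rfl, add_zero]
        · rw [agreementProfile_of_ne_of_ne _ _ _ _ _ _ hn hmo hmn, if_neg hmn, hmarg_w]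
          ring

/-- with CP 1 charging `p` to its non-associated subscribers and every other
CP charging `q`, the profile given by the stated flows `y, x, u, v, w` (with `δ = p − q`),
provided they are nonnegative, is a Nash equilibrium of the agreement congestion game. -/
theorem stmt7 (N : ℕ) (hN : 3 ≤ N) (φ a p q : ℝ)
    (ha : 0 < a)
    (δ y x u v w : ℝ)
    (hδ : δ = p - q)
    (hy : y = (φ + ((N : ℝ) - 1) * q / a) / N +
        ((N : ℝ) - 1) ^ 2 * δ / (a * (N : ℝ) * ((N : ℝ) + 1)))
    (hx : x = (φ - q / a) / N - ((N : ℝ) - 1) * δ / (a * (N : ℝ) * ((N : ℝ) + 1)))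
    (hu : u = (φ - q / a) / N - 2 * ((N : ℝ) - 1) * δ / (a * (N : ℝ) * ((N : ℝ) + 1)))
    (hv : v = (φ + ((N : ℝ) - 1) * q / a) / N + 2 * δ / (a * (N : ℝ) * ((N : ℝ) + 1)))
    (hw : w = (φ - q / a) / N + 2 * δ / (a * (N : ℝ) * ((N : ℝ) + 1)))
    (hy0 : 0 ≤ y) (hx0 : 0 ≤ x) (hu0 : 0 ≤ u) (hv0 : 0 ≤ v) (hw0 : 0 ≤ w) :
    IsNashV N φ a
      (fun m => if m = (⟨0, by omega⟩ : Fin N) then p else q)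
      (fun n m =>
        if n = (⟨0, by omega⟩ : Fin N) then
          (if m = (⟨0, by omega⟩ : Fin N) then y else x)
        else if m = (⟨0, by omega⟩ : Fin N) then u
        else if m = n then v
        else w) := by
  have hN0 : (N : ℝ) ≠ 0 := by positivity
  have hN1 : (N : ℝ) + 1 ≠ 0 := by positivity
  subst hδ hy hx hu hv hw
  refine isNashV_agreementProfile _ ha.le hy0 hx0 hu0 hv0 hw0 ?_ ?_ ?_ ?_ ?_ <;>
    field_simp <;> ring
end

section
/- Let N ≥ 2 be an integer, a > 0, φ > 0, and set q̄ = aφ(N+1)/(3N−1). Define u(p) = (φ − q̄/a)/N − 2(N−1)(p − q̄)/(a·N·(N+1)), the follower-equilibrium flow from each non-associated subscriber to a content provider charging p when all other content providers charge q̄ in the agreement game. Then the revenue function R(p) = p·(N−1)·u(p) attains its maximum over p ∈ [0, ∞) uniquely at p = q̄, i.e., for every p ≥ 0 with p ≠ q̄, p·(N−1)·u(p) < q̄·(N−1)·u(q̄). -/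
/-- Follower-equilibrium flow from each non-associated subscriber to a CP charging `p`
when all other CPs charge `q` in the agreement game. -/
noncomputable def uFlow (N : ℕ) (a φ p q : ℝ) : ℝ :=
  (φ - q / a) / N - 2 * ((N : ℝ) - 1) * (p - q) / (a * (N : ℝ) * ((N : ℝ) + 1))

/-!
The flow `u(p)` is affine in the own price `p` with slope `-k`, `k = 2(N-1)/(aN(N+1)) > 0`, so
the revenue `p·(N-1)·u(p)` is a concave quadratic. At the symmetric price `q̄` the first-order
condition `u(q̄) = k·q̄` holds, and then `R(q̄) - R(p) = (N-1)·k·(p - q̄)²`.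
-/

lemma mul_linearDemand_lt {c k p q : ℝ} (hc : 0 < c) (hk : 0 < k) (hne : p ≠ q) :
    p * c * (k * q - k * (p - q)) < q * c * (k * q) := by
  have hgap : q * c * (k * q) - p * c * (k * q - k * (p - q)) = c * k * (p - q) ^ 2 := by ring
  have hpos : 0 < c * k * (p - q) ^ 2 := by
    have := sub_ne_zero.2 hne
    positivity
  linarith

lemma uFlow_eq_self_sub (N : ℕ) (a φ p q : ℝ) :
    uFlow N a φ p q =
      uFlow N a φ q q - 2 * ((N : ℝ) - 1) / (a * (N : ℝ) * ((N : ℝ) + 1)) * (p - q) := by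
  simp only [uFlow, sub_self, mul_zero, zero_div, sub_zero]
  ring

lemma uFlow_symmetric_eq {N : ℕ} (hN : 1 ≤ N) {a φ qbar : ℝ} (ha : a ≠ 0)
    (hqbar : qbar = a * φ * ((N : ℝ) + 1) / (3 * (N : ℝ) - 1)) :
    uFlow N a φ qbar qbar = 2 * ((N : ℝ) - 1) / (a * (N : ℝ) * ((N : ℝ) + 1)) * qbar := by
  have hN1 : (1 : ℝ) ≤ N := by exact_mod_cast hN
  have h3 : (N : ℝ) * 3 - 1 ≠ 0 := by linarith
  have hN0 : (N : ℝ) ≠ 0 := by linarith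
  rw [uFlow, hqbar]
  field_simp
  ring

theorem stmt8_general (N : ℕ) (hN : 2 ≤ N) (a φ : ℝ) (ha : 0 < a)
    (qbar : ℝ) (hqbar : qbar = a * φ * ((N : ℝ) + 1) / (3 * (N : ℝ) - 1)) :
    ∀ p : ℝ, 0 ≤ p → p ≠ qbar →
      p * ((N : ℝ) - 1) * uFlow N a φ p qbar <
        qbar * ((N : ℝ) - 1) * uFlow N a φ qbar qbar := by
  intro p _ hne
  have hN1 : (0 : ℝ) < N - 1 := by
    have : (2 : ℝ) ≤ N := by exact_mod_cast hN
    linarith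
  rw [uFlow_eq_self_sub N a φ p qbar, uFlow_symmetric_eq (by omega) ha.ne' hqbar]
  exact mul_linearDemand_lt hN1 (by positivity) hne

/-- the deviating CP's revenue `R(p) = p·(N−1)·u(p)` against the symmetric
price `q̄ = aφ(N+1)/(3N−1)` is uniquely maximized over `p ∈ [0, ∞)` at `p = q̄`. -/
theorem stmt8 (N : ℕ) (hN : 2 ≤ N) (a φ : ℝ) (ha : 0 < a) (hφ : 0 < φ)
    (qbar : ℝ) (hqbar : qbar = a * φ * ((N : ℝ) + 1) / (3 * (N : ℝ) - 1)) :
    ∀ p : ℝ, 0 ≤ p → p ≠ qbar →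
      p * ((N : ℝ) - 1) * uFlow N a φ p qbar <
        qbar * ((N : ℝ) - 1) * uFlow N a φ qbar qbar :=
  stmt8_general N hN a φ ha qbar hqbar
end

section
/- (Lemma 1.) For every integer N ≥ 2 and all reals a > 0 and φ > 0, the equilibrium subscriber cost with agreements is strictly smaller than without agreements: aφ² + 2aφ²·((N−1)/(3N−1))²·(N+1)/N < aφ²·N. -/
/-! Dividing by `aφ²`, the claim is `2 r² (N + 1) / N < N - 1` for `r = (N - 1) / (3N - 1)`.
Since `N - 1 = r (3N - 1)`, after cancelling one factor `r` this becomes `2 r (N + 1) < N (3N - 1)`,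
which follows from `r < 1/3` and `2 (N + 1) ≤ 3N (3N - 1)`. -/

theorem two_mul_div_sq_mul_add_one_div_lt_sub_one {t : ℝ} (ht : 1 < t) :
    2 * ((t - 1) / (3 * t - 1)) ^ 2 * (t + 1) / t < t - 1 := by
  have ht0 : 0 < t := by linarith
  have h3 : 0 < 3 * t - 1 := by linarith
  set r := (t - 1) / (3 * t - 1) with hr_def
  have hr : 0 < r := div_pos (sub_pos.2 ht) h3
  have hr3 : r < 1 / 3 := by rw [hr_def, div_lt_iff₀ h3]; linarith
  have hrt : r * (3 * t - 1) = t - 1 := div_mul_cancel₀ _ h3.ne'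
  have hlin : 2 * r * (t + 1) < t * (3 * t - 1) := by nlinarith
  rw [div_lt_iff₀ ht0]
  calc 2 * r ^ 2 * (t + 1) = r * (2 * r * (t + 1)) := by ring
    _ < r * (t * (3 * t - 1)) := mul_lt_mul_of_pos_left hlin hr
    _ = (t - 1) * t := by rw [← hrt]; ring

/-- Lemma 1: the equilibrium subscriber cost with agreements is strictly
smaller than without agreements. -/
theorem stmt12 (N : ℕ) (hN : 2 ≤ N) (a φ : ℝ) (ha : 0 < a) (hφ : 0 < φ) :
    a * φ ^ 2 + 2 * a * φ ^ 2 * (((N : ℝ) - 1) / (3 * (N : ℝ) - 1)) ^ 2 * ((N : ℝ) + 1) / N <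
      a * φ ^ 2 * N := by
  have hN' : (1 : ℝ) < N := by exact_mod_cast hN
  calc a * φ ^ 2 + 2 * a * φ ^ 2 * (((N : ℝ) - 1) / (3 * N - 1)) ^ 2 * (N + 1) / N
      = a * φ ^ 2 * (1 + 2 * (((N : ℝ) - 1) / (3 * N - 1)) ^ 2 * (N + 1) / N) := by ring
    _ < a * φ ^ 2 * (1 + (N - 1)) := by
      gcongr
      exact two_mul_div_sq_mul_add_one_div_lt_sub_one hN'
    _ = a * φ ^ 2 * N := by ring
end

section
/- (Lemma 2.) For every integer N ≥ 2 and all reals a > 0 and φ > 0, the equilibrium revenue of each content provider with agreements is strictly smaller than without agreements: 2aφ²·((N−1)/(3N−1))²·(N+1)/N < (N−1)·aφ². -/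
lemma two_mul_sq_div_mul_lt {n : ℝ} (hn : 1 < n) :
    2 * ((n - 1) / (3 * n - 1)) ^ 2 * (n + 1) / n < n - 1 := by
  have h3 : 0 < 3 * n - 1 := by linarith
  rw [div_pow, div_lt_iff₀ (by linarith), mul_div_assoc', div_mul_eq_mul_div,
    div_lt_iff₀ (by positivity)]
  -- after cancelling `n - 1 > 0` this is `0 < 9n³ - 8n² + n + 2`
  nlinarith [mul_pos (sub_pos.2 hn) (sub_pos.2 hn), mul_pos (sub_pos.2 hn) h3,
    mul_pos (mul_pos (sub_pos.2 hn) (sub_pos.2 hn)) h3]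

/-- Lemma 2: the equilibrium revenue of each content provider with
agreements is strictly smaller than without agreements. -/
theorem stmt13 (N : ℕ) (hN : 2 ≤ N) (a φ : ℝ) (ha : 0 < a) (hφ : 0 < φ) :
    2 * a * φ ^ 2 * (((N : ℝ) - 1) / (3 * (N : ℝ) - 1)) ^ 2 * ((N : ℝ) + 1) / N <
      ((N : ℝ) - 1) * a * φ ^ 2 := by
  have hn : (1 : ℝ) < N := by exact_mod_cast hN
  have key := mul_lt_mul_of_pos_left (two_mul_sq_div_mul_lt hn) (by positivity : 0 < a * φ ^ 2)
  calc 2 * a * φ ^ 2 * (((N : ℝ) - 1) / (3 * (N : ℝ) - 1)) ^ 2 * ((N : ℝ) + 1) / N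
      = a * φ ^ 2 * (2 * (((N : ℝ) - 1) / (3 * N - 1)) ^ 2 * (N + 1) / N) := by ring
    _ < a * φ ^ 2 * ((N : ℝ) - 1) := key
    _ = ((N : ℝ) - 1) * a * φ ^ 2 := by ring
end

section
/- Let φ > 0 and, for each integer N ≥ 1, let ȳ(N) = (φ/N)·(1 + (N−1)(N+1)/(3N−1)) be the equilibrium download traffic from the privileged (associated) content provider in the agreement game. Then ȳ(N) > φ/3 for every N ≥ 1, and ȳ(N) converges to φ/3 as N → ∞; in particular each content provider is guaranteed a strictly positive amount of traffic bounded away from 0, whereas without agreements the per-subscriber equilibrium flow φ/M tends to 0 as the number M of content providers tends to infinity. -/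
open Filter Topology

/-! Writing `x = 1/N`, the flow is `φ (1 + 3x - 2x²) / (3 - x)`, a rational function of `x`
continuous at `0` with value `φ/3`; and `ȳ(N) - φ/3 = φ (10N - 6) / (3N (3N - 1))` is positive
for `N ≥ 1`. -/

/-- The equilibrium flow `ȳ(N)` from a subscriber to its associated content provider. -/
noncomputable def agreementFlow (φ N : ℝ) : ℝ :=
  φ / N * (1 + (N - 1) * (N + 1) / (3 * N - 1))

section

variable {φ N : ℝ}

theorem agreementFlow_eq_inv (hN : N ≠ 0) (hN3 : 3 * N - 1 ≠ 0) :
    agreementFlow φ N = φ * (1 + 3 * N⁻¹ - 2 * N⁻¹ ^ 2) / (3 - N⁻¹) := by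
  have h3 : 3 - N⁻¹ ≠ 0 := by
    rw [show 3 - N⁻¹ = (3 * N - 1) / N by field_simp]
    exact div_ne_zero hN3 hN
  unfold agreementFlow
  rw [one_add_div hN3]
  field_simp
  ring

theorem agreementFlow_sub_third (hN : N ≠ 0) (hN3 : 3 * N - 1 ≠ 0) :
    agreementFlow φ N - φ / 3 = φ * (10 * N - 6) / (3 * N * (3 * N - 1)) := by
  unfold agreementFlow
  rw [one_add_div hN3, div_mul_div_comm, div_sub_div _ _ (mul_ne_zero hN hN3) three_ne_zero,
    eq_div_iff (by simp [hN, hN3])]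
  field_simp
  ring

theorem third_lt_agreementFlow (hφ : 0 < φ) (hN : 1 ≤ N) : φ / 3 < agreementFlow φ N := by
  rw [← sub_pos, agreementFlow_sub_third (by positivity) (by linarith)]
  apply div_pos <;> nlinarith

theorem tendsto_agreementFlow_atTop (φ : ℝ) :
    Tendsto (agreementFlow φ) atTop (𝓝 (φ / 3)) := by
  set g : ℝ → ℝ := fun x => φ * (1 + 3 * x - 2 * x ^ 2) / (3 - x)
  have hg : ContinuousAt g 0 := by
    apply ContinuousAt.div <;> first | fun_prop | norm_num
  have hg0 : g 0 = φ / 3 := by simp [g]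
  have hlim : Tendsto (fun N : ℝ => g N⁻¹) atTop (𝓝 (φ / 3)) :=
    hg0 ▸ hg.tendsto.comp tendsto_inv_atTop_zero
  refine hlim.congr' ?_
  filter_upwards [eventually_ge_atTop 1] with N hN
  exact (agreementFlow_eq_inv (by positivity) (by linarith)).symm

end

/-- the equilibrium download traffic `ȳ(N) = (φ/N)(1 + (N−1)(N+1)/(3N−1))`
from the privileged CP in the agreement game satisfies `ȳ(N) > φ/3` for every `N ≥ 1` and
converges to `φ/3` as `N → ∞`; in contrast, without agreements the per-subscriber
equilibrium flow `φ/M` tends to `0` as the number `M` of content providers tends to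
infinity. -/
theorem stmt14 (φ : ℝ) (hφ : 0 < φ) :
    (∀ N : ℕ, 1 ≤ N →
      (φ / N) * (1 + ((N : ℝ) - 1) * ((N : ℝ) + 1) / (3 * (N : ℝ) - 1)) > φ / 3) ∧
    Tendsto (fun N : ℕ =>
        (φ / N) * (1 + ((N : ℝ) - 1) * ((N : ℝ) + 1) / (3 * (N : ℝ) - 1)))
      atTop (nhds (φ / 3)) ∧
    Tendsto (fun M : ℕ => φ / (M : ℝ)) atTop (nhds 0) :=
  ⟨fun _ hN => third_lt_agreementFlow hφ (by exact_mod_cast hN),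
    (tendsto_agreementFlow_atTop φ).comp tendsto_natCast_atTop_atTop,
    tendsto_const_div_atTop_nhds_zero_nat φ⟩
end
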